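/- arXiv:1401.5842 — 4 statements merged into one kernel-verified Lean document; each statement's English description precedes it below -/
import Mathlib

section
/- Let P be a reducible lossy VASS with variables x_1,…,x_n and let 𝒯 = CFA(P) be the transition system obtained by control flow abstraction. If there exists an enumeration τ_1,…,τ_k of 𝒯 together with variables y_1,…,y_k satisfying the ranking condition (i.e., the Ranking algorithm succeeds and returns the lexicographic ranking function ⟨y_1,…,y_k⟩), then P is terminating, i.e., P has no infinite trace. -/
open scoped BigOperators

/-- Update vectors in `ℤⁿ`. -/
abbrev Upd (n : ℕ) := Fin n → ℤ

/-- Valuations of the variables (values are natural numbers). -/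
abbrev Valu (n : ℕ) := Fin n → ℕ

/-- An edge (transition) of a VASS: source location, update vector, target location. -/
abbrev VEdge (n : ℕ) (L : Type*) := L × Upd n × L

/-- A lossy vector addition system with states over `n` variables and locations `L`. -/
structure VASS (n : ℕ) (L : Type*) where
  E : Set (VEdge n L)

namespace VASS

variable {n : ℕ} {L : Type*}

/-- `FPath P a p b`: the list of edges `p` is a finite path of `P` from `a` to `b`. -/
inductive FPath (P : VASS n L) : L → List (VEdge n L) → L → Prop
  | nil (a : L) : FPath P a [] a
  | cons {a b c : L} {d : Upd n} {p : List (VEdge n L)} :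
      (a, d, b) ∈ P.E → FPath P b p c → FPath P a ((a, d, b) :: p) c

/-- `x` occurs among the locations of the path `p` starting at location `a`. -/
def Visits (a : L) (p : List (VEdge n L)) (x : L) : Prop :=
  x = a ∨ ∃ e ∈ p, e.2.2 = x

/-- `a` dominates `b` (w.r.t. the entry location):
every path from the entry to `b` includes `a`. -/
def Dominates (P : VASS n L) (entry a b : L) : Prop :=
  ∀ p : List (VEdge n L), P.FPath entry p b → Visits entry p a

/-- An edge `l₁ → l₂` is a back edge if `l₂` dominates `l₁`. -/
def BackEdge (P : VASS n L) (entry : L) (e : VEdge n L) : Prop :=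
  e ∈ P.E ∧ P.Dominates entry e.2.2 e.1

/-- All locations are reachable from the entry location. -/
def EntryReach (P : VASS n L) (entry : L) : Prop :=
  ∀ x : L, ∃ p, P.FPath entry p x

/-- `P` is reducible: the graph becomes acyclic after removing all back edges. -/
def Reducible (P : VASS n L) (entry : L) : Prop :=
  ∀ (a : L) (p : List (VEdge n L)), (∀ e ∈ p, ¬ P.BackEdge entry e) → P.FPath a p a → p = []

/-- `h` is a loop header: the target of some back edge. -/
def LoopHeader (P : VASS n L) (entry h : L) : Prop :=
  ∃ e, P.BackEdge entry e ∧ e.2.2 = h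

/-- The natural loop of the loop header `h`: all locations `x` dominated by `h` such that
there is a back edge `m → h` and a path from `x` to `m` that does not contain `h`. -/
def NaturalLoop (P : VASS n L) (entry h : L) : Set L :=
  {x | P.Dominates entry h x ∧ ∃ e, P.BackEdge entry e ∧ e.2.2 = h ∧
    ∃ p, P.FPath x p e.1 ∧ ∀ e' ∈ p, e'.2.2 ≠ h}

/-- `p` is a loop-path at loop header `l`: a simple cyclic path starting and ending at `l`
that visits only locations inside the natural loop of `l`. -/
def LoopPath (P : VASS n L) (entry l : L) (p : List (VEdge n L)) : Prop :=
  P.LoopHeader entry l ∧ P.FPath l p l ∧ p ≠ [] ∧ (p.map Prod.fst).Nodup ∧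
    ∀ x, Visits l p x → x ∈ P.NaturalLoop entry l

/-- The contracted update of a path: the sum of the update vectors along the path. -/
def contractUpd (p : List (VEdge n L)) : Upd n :=
  (p.map (fun e => e.2.1)).sum

/-- Control flow abstraction: the transition system containing the contracted update
of every loop-path of `P`. -/
def CFA (P : VASS n L) (entry : L) : Set (Upd n) :=
  {c | ∃ l p, P.LoopPath entry l p ∧ c = contractUpd p}

/-- `InstanceAux P h π ν D`: `ν` is an instance of the loop-path `π` (whose header is `h`),
interleaving the designated transitions of `π` with cyclic filler paths avoiding `h`;
`D` is the set of positions in `ν` of the designated transitions of `π`. -/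
inductive InstanceAux (P : VASS n L) (h : L) :
    List (VEdge n L) → List (VEdge n L) → Set ℕ → Prop
  | single (e : VEdge n L) : InstanceAux P h [e] [e] {0}
  | cons (e : VEdge n L) (q rest ν : List (VEdge n L)) (D : Set ℕ) :
      P.FPath e.2.2 q e.2.2 → e.2.2 ≠ h → (∀ e' ∈ q, e'.2.2 ≠ h) →
      InstanceAux P h rest ν D →
      InstanceAux P h (e :: rest) (e :: (q ++ ν)) (insert 0 ((fun m => m + q.length + 1) '' D))

/-- `ν` is an instance of the loop-path `π`, with `D` the positions of the
designated transitions of `π` inside `ν`. -/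
def IsInstance (P : VASS n L) (π ν : List (VEdge n L)) (D : Set ℕ) : Prop :=
  ∃ e rest, π = e :: rest ∧ P.InstanceAux e.1 π ν D

/-- The path `p` contains an instance of `π` starting at position `i` and of length `k`. -/
def InstanceAt (P : VASS n L) (π p : List (VEdge n L)) (i k : ℕ) : Prop :=
  i + k ≤ p.length ∧ 1 ≤ k ∧ ∃ D, P.IsInstance π ((p.drop i).take k) D

/-- The number of instances of the loop-path `π` contained in the path `p`. -/
noncomputable def numInstances (P : VASS n L) (π p : List (VEdge n L)) : ℕ :=
  {q : ℕ × ℕ | P.InstanceAt π p q.1 q.2}.ncard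

/-- The transition occurrence at position `t` of the path `p` belongs to the instance of
the loop-path `π` contained in `p` at position `i` with length `k` (i.e. `t` is one of the
designated transitions of that instance). -/
def BelongsAt (P : VASS n L) (π p : List (VEdge n L)) (i k t : ℕ) : Prop :=
  i + k ≤ p.length ∧ 1 ≤ k ∧ i ≤ t ∧ t < i + k ∧
    ∃ D, P.IsInstance π ((p.drop i).take k) D ∧ (t - i) ∈ D

/-- An infinite trace of the VASS `P`. -/
def InfTrace (P : VASS n L) (locs : ℕ → L) (upds : ℕ → Upd n) (vals : ℕ → Valu n) : Prop :=
  ∀ i, (locs i, upds i, locs (i+1)) ∈ P.E ∧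
    ∀ j, (vals (i+1) j : ℤ) ≤ (vals i j : ℤ) + upds i j

/-- `P` is terminating: it has no infinite trace. -/
def Terminating (P : VASS n L) : Prop :=
  ¬ ∃ locs upds vals, P.InfTrace locs upds vals

/-- The valuations `vals` form a trace of `P` along the finite path `p`. -/
def FinTraceVals (P : VASS n L) (p : List (VEdge n L)) (vals : ℕ → Valu n) : Prop :=
  ∀ (i : ℕ) (hi : i < p.length), ∀ j,
    (vals (i+1) j : ℤ) ≤ (vals i j : ℤ) + (p.get ⟨i, hi⟩).2.1 j

end VASS

/-- An enumeration `τ₁,…,τ_k` of the transition system `T` together with variables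
`y₁,…,y_k` satisfies the ranking condition of the `Ranking` algorithm:
`τᵢ ⊨ yᵢ' < yᵢ`, and `τⱼ ⊨ yᵢ' ≤ yᵢ` for all `j ≥ i`. -/
def RankingCondition {n : ℕ} (T : Set (Upd n)) {k : ℕ}
    (τ : Fin k → Upd n) (y : Fin k → Fin n) : Prop :=
  Function.Injective τ ∧ Set.range τ = T ∧
    (∀ i, τ i (y i) < 0) ∧ ∀ i j : Fin k, i ≤ j → τ j (y i) ≤ 0

/-- An infinite lossy execution of the transition system `T`. -/
def LossyExec {n : ℕ} (T : Set (Upd n)) (v : ℕ → Valu n) (d : ℕ → Upd n) : Prop :=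
  ∀ m, d m ∈ T ∧ ∀ j, (v (m+1) j : ℤ) ≤ (v m j : ℤ) + d m j

/-- A finite lossy execution `v 0, …, v N` of the transition system `T`. -/
def FinLossyExec {n : ℕ} (T : Set (Upd n)) (N : ℕ) (v : ℕ → Valu n) (d : ℕ → Upd n) : Prop :=
  ∀ m < N, d m ∈ T ∧ ∀ j, (v (m+1) j : ℤ) ≤ (v m j : ℤ) + d m j

/-! Along an infinite trace some location `a` recurs infinitely often, and between two
consecutive visits the trace runs a cycle at `a`. Every cycle splits into simple cycles, and by
reducibility each simple cycle contains a back edge; rotated to start at the target of that edge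
it is a loop-path, so the cycle's total update is a nonempty sum of transitions of `CFA P`. If
`τ m` has the least index among them, the ranking condition makes `y 0, …, y m` non-increasing
and `y m` strictly decreasing over the cycle, so the valuations at the visits of `a` descend
lexicographically in `(y 0, …, y (k-1))`, which is impossible in `ℕᵏ`. -/

theorem Pi.toLex_lt_of_le_of_lt {ι : Type*} [LinearOrder ι] [WellFoundedLT ι] {β : ι → Type*}
    [∀ i, PartialOrder (β i)] {x y : ∀ i, β i} {m : ι} (hle : ∀ i ≤ m, x i ≤ y i)
    (hlt : x m < y m) : toLex x < toLex y := by
  obtain ⟨i, hi, hmin⟩ := wellFounded_lt.has_min {i | x i ≠ y i} ⟨m, hlt.ne⟩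
  have him : i ≤ m := not_lt.1 fun h => hmin m hlt.ne h
  exact ⟨i, fun j hj => not_not.1 fun h => hmin j h hj, (hle i him).lt_of_ne hi⟩

theorem List.exists_eq_append_cons_append_cons_of_not_nodup_map {α β : Type*} {f : α → β}
    {l : List α} (h : ¬(l.map f).Nodup) :
    ∃ A B C a b, l = A ++ a :: B ++ b :: C ∧ f a = f b := by
  obtain ⟨x, hx⟩ := not_forall_not.1 (mt List.nodup_iff_sublist.2 h)
  obtain ⟨l', hl', hmap⟩ := List.sublist_map_iff.1 hx
  obtain ⟨a, b, rfl⟩ : ∃ a b, l' = [a, b] :=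
    List.length_eq_two.1 (by simpa using congrArg List.length hmap.symm)
  obtain ⟨r₁, r₂, rfl, ha, hb⟩ := List.cons_sublist_iff.1 hl'
  obtain ⟨A, B, rfl⟩ := List.append_of_mem ha
  obtain ⟨B', C, rfl⟩ := List.append_of_mem (List.singleton_sublist.1 hb)
  simp only [List.map_cons, List.map_nil, List.cons.injEq, and_true] at hmap
  exact ⟨A, B ++ B', C, a, b, by simp, hmap.1.symm.trans hmap.2⟩

namespace VASS

variable {n : ℕ} {L : Type*} {P : VASS n L} {entry a b c x : L} {p q : List (VEdge n L)}
  {locs : ℕ → L} {upds : ℕ → Upd n} {vals : ℕ → Valu n}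

theorem fPath_cons_iff {e : VEdge n L} :
    P.FPath a (e :: p) c ↔ e.1 = a ∧ e ∈ P.E ∧ P.FPath e.2.2 p c := by
  obtain ⟨s, d, t⟩ := e
  constructor
  · rintro (_ | ⟨he, hp⟩)
    exact ⟨rfl, he, hp⟩
  · rintro ⟨rfl, he, hp⟩
    exact .cons he hp

theorem fPath_append_iff : P.FPath a (p ++ q) c ↔ ∃ b, P.FPath a p b ∧ P.FPath b q c := by
  induction p generalizing a with
  | nil => exact ⟨fun h => ⟨a, .nil a, h⟩, fun ⟨b, hp, hq⟩ => by cases hp; exact hq⟩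
  | cons e p ih =>
    simp only [List.cons_append, fPath_cons_iff, ih]
    exact ⟨fun ⟨h1, he, b, hp, hq⟩ => ⟨b, ⟨h1, he, hp⟩, hq⟩,
      fun ⟨b, ⟨h1, he, hp⟩, hq⟩ => ⟨h1, he, b, hp, hq⟩⟩

theorem FPath.append (hp : P.FPath a p b) (hq : P.FPath b q c) : P.FPath a (p ++ q) c :=
  fPath_append_iff.2 ⟨b, hp, hq⟩

theorem FPath.map_fst_append (hp : P.FPath a p c) :
    p.map Prod.fst ++ [c] = a :: p.map (·.2.2) := by
  induction hp with
  | nil => rfl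
  | cons _ _ ih => simp [ih]

theorem FPath.exists_suffix_of_visits (hp : P.FPath a p c) (hx : Visits a p x) :
    ∃ w, w <:+ p ∧ P.FPath x w c := by
  induction hp with
  | nil a =>
    obtain rfl | ⟨_, he, _⟩ := hx
    exacts [⟨[], List.nil_suffix, .nil _⟩, absurd he List.not_mem_nil]
  | @cons a b c d p he hp ih =>
    rcases hx with rfl | ⟨e', he', rfl⟩
    · exact ⟨_, List.suffix_refl _, .cons he hp⟩
    rcases List.mem_cons.1 he' with rfl | he'
    · exact ⟨p, List.suffix_cons _ _, hp⟩
    · obtain ⟨w, hw, hwp⟩ := ih (Or.inr ⟨e', he', rfl⟩)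
      exact ⟨w, hw.trans (List.suffix_cons _ _), hwp⟩

theorem contractUpd_perm (h : p.Perm q) : contractUpd p = contractUpd q :=
  (h.map _).sum_eq

theorem mem_naturalLoop_of_fPath {e : VEdge n L} {w : List (VEdge n L)}
    (hbe : P.BackEdge entry e) (hw : P.FPath x w e.1) (hwh : ∀ e' ∈ w, e'.2.2 ≠ e.2.2) :
    x ∈ P.NaturalLoop entry e.2.2 := by
  refine ⟨fun r hr => ?_, e, hbe, rfl, w, hw, hwh⟩
  rcases hbe.2 (r ++ w) (hr.append hw) with h | ⟨e', he', h⟩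
  · exact Or.inl h
  rcases List.mem_append.1 he' with he' | he'
  · exact Or.inr ⟨e', he', h⟩
  · exact absurd h (hwh e' he')

def IsSimpleCycle (P : VASS n L) (b : L) (q : List (VEdge n L)) : Prop :=
  P.FPath b q b ∧ q ≠ [] ∧ (q.map Prod.fst).Nodup

theorem IsSimpleCycle.contractUpd_mem_CFA (hred : P.Reducible entry) (hq : P.IsSimpleCycle b q) :
    contractUpd q ∈ P.CFA entry := by
  obtain ⟨hq, hne, hnd⟩ := hq
  obtain ⟨e, he, hbe⟩ : ∃ e ∈ q, P.BackEdge entry e := by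
    by_contra! h
    exact hne (hred b q h hq)
  obtain ⟨q₁, q₂, rfl⟩ := List.append_of_mem he
  obtain ⟨c, hq₁, hq₂⟩ := fPath_append_iff.1 hq
  obtain ⟨rfl, heE, hq₂⟩ := fPath_cons_iff.1 hq₂
  set r := q₂ ++ q₁
  have hr : P.FPath e.2.2 r e.1 := hq₂.append hq₁
  have hp : P.FPath e.2.2 (r ++ [e]) e.2.2 := hr.append (fPath_cons_iff.2 ⟨rfl, heE, .nil _⟩)
  have hperm : (r ++ [e]).Perm (q₁ ++ e :: q₂) := by
    simpa [r] using List.perm_append_comm (l₁ := q₂) (l₂ := q₁ ++ [e])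
  have hnd' : ((r ++ [e]).map Prod.fst).Nodup := (hperm.map _).nodup_iff.2 hnd
  -- the sources of `r ++ [e]` are the header followed by the targets of `r`
  have hrh : ∀ e' ∈ r, e'.2.2 ≠ e.2.2 := by
    have : (r ++ [e]).map Prod.fst = e.2.2 :: r.map (·.2.2) := by
      rw [List.map_append, List.map_singleton]
      exact hr.map_fst_append
    rw [this, List.nodup_cons] at hnd'
    exact fun e' he' h => hnd'.1 (List.mem_map.2 ⟨e', he', h⟩)
  refine ⟨e.2.2, r ++ [e], ⟨⟨e, hbe, rfl⟩, hp, by simp, hnd', fun x hx => ?_⟩,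
    (contractUpd_perm hperm).symm⟩
  have hxr : Visits e.2.2 r x := by
    rcases hx with rfl | ⟨e', he', rfl⟩
    · exact Or.inl rfl
    rcases List.mem_append.1 he' with he' | he'
    · exact Or.inr ⟨e', he', rfl⟩
    · exact Or.inl (by rw [List.mem_singleton.1 he'])
  obtain ⟨w, hw, hwp⟩ := hr.exists_suffix_of_visits hxr
  exact mem_naturalLoop_of_fPath hbe hwp fun e' he' => hrh e' (hw.subset he')

theorem FPath.exists_list_sum_eq_contractUpd {S : Set (Upd n)}
    (hS : ∀ b q, P.IsSimpleCycle b q → contractUpd q ∈ S) (hp : P.FPath a p a) (hne : p ≠ []) :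
    ∃ l : List (Upd n), l ≠ [] ∧ (∀ c ∈ l, c ∈ S) ∧ contractUpd p = l.sum := by
  induction hlen : p.length using Nat.strong_induction_on generalizing a p with
  | _ N ih =>
  by_cases hnd : (p.map Prod.fst).Nodup
  · exact ⟨[contractUpd p], by simp, by simpa using hS a p ⟨hp, hne, hnd⟩, by simp⟩
  -- a repeated source splits off the cycle `e :: B`, leaving the cycle `A ++ e' :: C`
  obtain ⟨A, B, C, e, e', rfl, hee'⟩ :=
    List.exists_eq_append_cons_append_cons_of_not_nodup_map hnd
  obtain ⟨_, hAB, hC⟩ := fPath_append_iff.1 hp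
  obtain ⟨_, hA, hB⟩ := fPath_append_iff.1 hAB
  obtain ⟨rfl, -, -⟩ := fPath_cons_iff.1 hB
  obtain ⟨rfl, -, -⟩ := fPath_cons_iff.1 hC
  rw [← hee'] at hB hC
  obtain ⟨l₁, hl₁, hl₁S, hsum₁⟩ :=
    ih _ (by simp [← hlen]; omega) hB (List.cons_ne_nil _ _) rfl
  obtain ⟨l₂, -, hl₂S, hsum₂⟩ :=
    ih _ (by simp [← hlen]) (hA.append hC) (by simp) rfl
  refine ⟨l₁ ++ l₂, by simp [hl₁], fun c hc => ?_, ?_⟩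
  · exact (List.mem_append.1 hc).elim (hl₁S c) (hl₂S c)
  · rw [List.sum_append, ← hsum₁, ← hsum₂]
    simp only [contractUpd, List.map_append, List.map_cons, List.sum_append, List.sum_cons]
    abel

def traceSegment (locs : ℕ → L) (upds : ℕ → Upd n) (s d : ℕ) : List (VEdge n L) :=
  (List.range' s d).map fun i => (locs i, upds i, locs (i + 1))

theorem InfTrace.fPath_traceSegment (h : P.InfTrace locs upds vals) (s d : ℕ) :
    P.FPath (locs s) (traceSegment locs upds s d) (locs (s + d)) := by
  induction d generalizing s with
  | zero => exact .nil _
  | succ d ih =>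
    rw [traceSegment, List.range'_succ, List.map_cons, show s + (d + 1) = s + 1 + d by omega]
    exact .cons (h s).1 (ih (s + 1))

theorem InfTrace.le_add_contractUpd_traceSegment (h : P.InfTrace locs upds vals) (s d : ℕ)
    (j : Fin n) : (vals (s + d) j : ℤ) ≤ vals s j + contractUpd (traceSegment locs upds s d) j := by
  induction d generalizing s with
  | zero => simp [traceSegment, contractUpd]
  | succ d ih =>
    have hstep := (h s).2 j
    have hrest := ih (s + 1)
    rw [show s + (d + 1) = s + 1 + d by omega]
    simp only [traceSegment, contractUpd, List.range'_succ, List.map_cons, List.sum_cons,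
      Pi.add_apply] at hrest ⊢
    linarith

end VASS

theorem RankingCondition.toLex_lt {n k : ℕ} {T : Set (Upd n)} {τ : Fin k → Upd n}
    {y : Fin k → Fin n} (h : RankingCondition T τ y) {l : List (Upd n)} (hl : l ≠ [])
    (hlT : ∀ c ∈ l, c ∈ T) {v v' : Valu n} (hv : ∀ j, (v' j : ℤ) ≤ v j + l.sum j) :
    toLex (fun r => v' (y r)) < toLex (fun r => v (y r)) := by
  obtain ⟨-, hrange, hdec, hnonincr⟩ := h
  have hlτ : ∀ c ∈ l, c ∈ Set.range τ := hrange ▸ hlT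
  obtain ⟨c, hc⟩ := List.exists_mem_of_ne_nil l hl
  obtain ⟨i, rfl⟩ := hlτ c hc
  obtain ⟨m, hm, hmin⟩ := wellFounded_lt.has_min {i | τ i ∈ l} ⟨i, hc⟩
  have hle : ∀ r ≤ m, ∀ c ∈ l, c (y r) ≤ 0 := by
    intro r hr c hc
    obtain ⟨s, rfl⟩ := hlτ c hc
    exact hnonincr r s (hr.trans (not_lt.1 (hmin s hc)))
  refine Pi.toLex_lt_of_le_of_lt (m := m) (fun r hr => ?_) ?_
  · have hsum : l.sum (y r) ≤ 0 := by
      simpa [Pi.list_sum_apply] using List.sum_le_sum (g := fun _ => (0 : ℤ)) (hle r hr)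
    have := hv (y r)
    omega
  · have hsum : l.sum (y m) < 0 := by
      simpa [Pi.list_sum_apply] using
        List.sum_lt_sum (fun c => c (y m)) (fun _ => (0 : ℤ)) (hle m le_rfl) ⟨τ m, hm, hdec m⟩
    have := hv (y m)
    omega

theorem vass_ranking_terminating_general
    {n : ℕ} {L : Type*} [Finite L] (P : VASS n L) (entry : L)
    (hred : P.Reducible entry)
    {k : ℕ} (τ : Fin k → Upd n) (y : Fin k → Fin n)
    (hrank : RankingCondition (P.CFA entry) τ y) :
    P.Terminating := by
  rintro ⟨locs, upds, vals, htr⟩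
  obtain ⟨a, ha⟩ := Finite.exists_infinite_fiber locs
  have hinf : {i | locs i = a}.Infinite := Set.infinite_coe_iff.1 ha
  set t := Nat.nth fun i => locs i = a
  have hta : ∀ i, locs (t i) = a := Nat.nth_mem_of_infinite hinf
  set V : ℕ → Lex (Fin k → ℕ) := fun i => toLex fun r => vals (t i) (y r)
  have hdesc : ∀ i, V (i + 1) < V i := by
    intro i
    obtain ⟨d, hd⟩ := Nat.exists_eq_add_of_lt (Nat.nth_strictMono hinf i.lt_succ_self)
    have hcycle := htr.fPath_traceSegment (t i) (d + 1)
    rw [← add_assoc, ← hd, hta, hta] at hcycle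
    obtain ⟨l, hl, hlT, hsum⟩ := hcycle.exists_list_sum_eq_contractUpd
      (fun _ _ hq => hq.contractUpd_mem_CFA hred) (by simp [VASS.traceSegment])
    refine hrank.toLex_lt hl hlT fun j => ?_
    have hval := htr.le_add_contractUpd_traceSegment (t i) (d + 1) j
    rwa [← add_assoc, ← hd, hsum] at hval
  exact not_strictAnti_of_wellFoundedLT _ (strictAnti_nat_of_succ_lt hdesc)

/-- If the `Ranking` algorithm succeeds on the control flow abstraction
of a reducible lossy VASS `P`, i.e. there is an enumeration `τ₁,…,τ_k` of `CFA P` together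
with variables `y₁,…,y_k` satisfying the ranking condition, then `P` is terminating. -/
theorem vass_ranking_terminating
    {n : ℕ} {L : Type*} [Finite L] (P : VASS n L) (entry : L)
    (hEfin : P.E.Finite)
    (hreach : P.EntryReach entry)
    (hred : P.Reducible entry)
    {k : ℕ} (τ : Fin k → Upd n) (y : Fin k → Fin n)
    (hrank : RankingCondition (P.CFA entry) τ y) :
    P.Terminating :=
  vass_ranking_terminating_general P entry hred τ y hrank
end

section
/- Let 𝒯 be a transition system over variables x_1,…,x_n admitting an enumeration τ_1,…,τ_k of 𝒯 and variables y_1,…,y_k satisfying the ranking condition. Then 𝒯 has no infinite lossy execution. -/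
open scoped BigOperators

/-- A transition system admitting an enumeration `τ₁,…,τ_k` with
variables `y₁,…,y_k` satisfying the ranking condition has no infinite lossy execution. -/
theorem ranking_no_infinite_lossy_exec
    {n k : ℕ} (T : Set (Upd n)) (τ : Fin k → Upd n) (y : Fin k → Fin n)
    (hrank : RankingCondition T τ y) :
    ¬ ∃ (v : ℕ → Valu n) (d : ℕ → Upd n), LossyExec T v d := by
  rintro ⟨v, d, hexec⟩
  obtain ⟨hinj, hrange, hstrict, hle⟩ := hrank
  set g : ℕ → Lex (Fin k → ℕ) := fun m => toLex (fun i => v m (y i)) with hg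
  have step : ∀ m, g (m + 1) < g m := by
    intro m
    obtain ⟨hmem, hv⟩ := hexec m
    rw [← hrange] at hmem
    obtain ⟨i₀, hi₀⟩ := hmem
    have hSne : v (m + 1) (y i₀) < v m (y i₀) := by
      have h1 := hv (y i₀)
      have h2 := hstrict i₀
      rw [hi₀] at h2
      have : (v (m + 1) (y i₀) : ℤ) < (v m (y i₀) : ℤ) := by omega
      exact_mod_cast this
    obtain ⟨j, hjS, hjmin⟩ :=
      (wellFounded_lt (α := Fin k)).has_min
        {j : Fin k | v (m + 1) (y j) < v m (y j)} ⟨i₀, hSne⟩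
    have hji₀ : j ≤ i₀ := le_of_not_gt fun h => hjmin i₀ hSne h
    refine ⟨j, ?_, hjS⟩
    intro j' hj'
    have hj'i₀ : j' ≤ i₀ := le_of_lt (lt_of_lt_of_le hj' hji₀)
    have hle' : v (m + 1) (y j') ≤ v m (y j') := by
      have h1 := hv (y j')
      have h2 := hle j' i₀ hj'i₀
      rw [hi₀] at h2
      have : (v (m + 1) (y j') : ℤ) ≤ (v m (y j') : ℤ) := by omega
      exact_mod_cast this
    have hnot : ¬ v (m + 1) (y j') < v m (y j') := fun h => hjmin j' h hj'
    exact le_antisymm hle' (le_of_not_gt hnot)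
  obtain ⟨a, ⟨m, rfl⟩, hmin⟩ :=
    (IsWellFounded.wf : WellFounded ((· < ·) : Lex (Fin k → ℕ) → _ → Prop)).has_min
      (Set.range g) ⟨g 0, 0, rfl⟩
  exact hmin (g (m + 1)) ⟨m + 1, rfl⟩ (step m)
end

section
/- Let n ≥ 1, let I_1,…,I_n be real numbers and let c_{ij} be real numbers for all 1 ≤ i < j ≤ n. Define b_1,…,b_n by the recurrence b_j = I_j + Σ_{i<j} b_i · c_{ij}. Then b_n = I_n + Σ_{k=1}^{n-1} Σ_{1 ≤ i_1 < i_2 < ⋯ < i_k ≤ n-1} I_{i_1} · c_{i_1 i_2} · c_{i_2 i_3} ⋯ c_{i_{k-1} i_k} · c_{i_k n}. -/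
/-!
Strong induction on `j`. Substituting the closed forms of `b_i` (`i < j`) into the recurrence,
the term `b_i · c_{ij}` becomes the sum over the chains ending in `i`, each extended by the step
`i → j`; these are exactly the chains of `{1, …, j-1}` whose largest element is `i`. Splitting the
subsets of `{1, …, j-1}` by their maximum thus reassembles the closed form for `b_j`, the empty
chain contributing `I_j`.
-/

open scoped BigOperators

/-- `chainProd c n [i₁, …, i_k] = c i₁ i₂ ⋯ c i_{k-1} i_k · c i_k n`:
the product of the coefficients along the chain `i₁ < ⋯ < i_k < n`. -/
def chainProd (c : ℕ → ℕ → ℝ) (n : ℕ) : List ℕ → ℝ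
  | [] => 1
  | [i] => c i n
  | i :: j :: rest => c i j * chainProd c n (j :: rest)

open Finset

lemma List.headI_append_of_ne_nil {α : Type*} [Inhabited α] {l : List α} (h : l ≠ [])
    (l' : List α) : (l ++ l').headI = l.headI := by
  cases l with
  | nil => contradiction
  | cons a l => rfl

lemma Finset.sort_insert_of_forall_lt {α : Type*} [LinearOrder α] {s : Finset α} {a : α}
    (h : ∀ b ∈ s, b < a) : (insert a s).sort (· ≤ ·) = s.sort (· ≤ ·) ++ [a] := by
  have hnodup : (s.sort (· ≤ ·) ++ [a]).Nodup :=
    (sort_nodup s _).append (List.nodup_singleton a) fun b hb hba => by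
      simp only [List.mem_singleton] at hba
      exact (h b ((mem_sort _).1 hb)).ne hba
  have hsorted : (s.sort (· ≤ ·) ++ [a]).Pairwise (· ≤ ·) :=
    List.pairwise_append.2 ⟨pairwise_sort _ _, List.pairwise_singleton _ _,
      fun b hb a' ha' => List.mem_singleton.1 ha' ▸ (h b ((mem_sort _).1 hb)).le⟩
  simpa using (List.toFinset_sort (· ≤ ·) hnodup).2 hsorted

lemma Finset.sum_powerset_Ico_eq_add_sum_insert {M : Type*} [AddCommMonoid M]
    (f : Finset ℕ → M) (a b : ℕ) :
    ∑ S ∈ (Ico a b).powerset, f S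
      = f ∅ + ∑ i ∈ Ico a b, ∑ T ∈ (Ico a i).powerset, f (insert i T) := by
  induction b with
  | zero => simp
  | succ b ih =>
    rcases le_or_gt a b with hab | hba
    · have hb : b ∉ Ico a b := by simp
      rw [Nat.Ico_succ_right_eq_insert_Ico hab, sum_powerset_insert hb, sum_insert hb, ih]
      abel
    · simp [Ico_eq_empty_of_le (Nat.succ_le_of_lt hba)]

lemma Finset.sum_powerset_eq_add_sum_Icc_card {α M : Type*} [DecidableEq α] [AddCommMonoid M]
    (s : Finset α) (f : Finset α → M) :
    ∑ S ∈ s.powerset, f S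
      = f ∅ + ∑ k ∈ Icc 1 #s, ∑ S ∈ s.powerset.filter (fun S => S.card = k), f S := by
  rw [sum_powerset, sum_range_succ', powersetCard_zero, sum_singleton, add_comm, range_eq_Ico,
    sum_Ico_add' (fun k => ∑ t ∈ powersetCard k s, f t), zero_add, Ico_add_one_right_eq_Icc]
  simp only [powersetCard_eq_filter]

lemma chainProd_append_singleton (c : ℕ → ℕ → ℝ) (n m : ℕ) :
    ∀ l : List ℕ, chainProd c n (l ++ [m]) = chainProd c m l * c m n
  | [] => by simp [chainProd]
  | [i] => by simp [chainProd]
  | i :: j :: rest => by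
    rw [List.cons_append, List.cons_append, chainProd, ← List.cons_append,
      chainProd_append_singleton c n m (j :: rest), chainProd, mul_assoc]

/-- The weight of the chain `T ∪ {m}` ending in `m`. Taking the head of `T.sort ++ [m]` rather
than of `T.sort` makes the empty chain weigh `I m` instead of `I ([].headI) = I 0`. -/
def chainWeight (I : ℕ → ℝ) (c : ℕ → ℕ → ℝ) (m : ℕ) (T : Finset ℕ) : ℝ :=
  I (T.sort (· ≤ ·) ++ [m]).headI * chainProd c m (T.sort (· ≤ ·))

section chainWeight

variable {I : ℕ → ℝ} {c : ℕ → ℕ → ℝ}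

@[simp]
lemma chainWeight_empty (m : ℕ) : chainWeight I c m ∅ = I m := by
  simp [chainWeight, chainProd]

lemma chainWeight_of_nonempty {T : Finset ℕ} (hT : T.Nonempty) (m : ℕ) :
    chainWeight I c m T = I (T.sort (· ≤ ·)).headI * chainProd c m (T.sort (· ≤ ·)) := by
  rw [chainWeight, List.headI_append_of_ne_nil]
  simpa [← List.length_pos_iff] using hT.card_pos

lemma chainWeight_insert {T : Finset ℕ} {i : ℕ} (h : ∀ x ∈ T, x < i) (m : ℕ) :
    chainWeight I c m (insert i T) = chainWeight I c i T * c i m := by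
  rw [chainWeight, chainWeight, sort_insert_of_forall_lt h, chainProd_append_singleton,
    List.headI_append_of_ne_nil (by simp), mul_assoc]

lemma eq_sum_chainWeight_of_recurrence {n : ℕ} {b : ℕ → ℝ}
    (hb : ∀ j, 1 ≤ j → j ≤ n → b j = I j + ∑ i ∈ Ico 1 j, b i * c i j) :
    ∀ m, 1 ≤ m → m ≤ n → b m = ∑ T ∈ (Ico 1 m).powerset, chainWeight I c m T := by
  intro m
  induction m using Nat.strong_induction_on with
  | _ m ih =>
    intro hm hmn
    rw [hb m hm hmn, sum_powerset_Ico_eq_add_sum_insert, chainWeight_empty]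
    congr 1
    refine sum_congr rfl fun i hi => ?_
    obtain ⟨hi, him⟩ := mem_Ico.1 hi
    rw [ih i him hi (him.le.trans hmn), sum_mul]
    exact sum_congr rfl fun T hT =>
      (chainWeight_insert (fun x hx => (mem_Ico.1 (mem_powerset.1 hT hx)).2) m).symm

end chainWeight

/-- If `b₁, …, b_n` satisfy the recurrence
`b_j = I_j + Σ_{i<j} b_i · c_{ij}`, then
`b_n = I_n + Σ_{k=1}^{n-1} Σ_{1 ≤ i₁ < ⋯ < i_k ≤ n-1} I_{i₁} · c_{i₁ i₂} ⋯ c_{i_{k-1} i_k} · c_{i_k n}`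
(the sets `S ⊆ {1, …, n-1}` of cardinality `k`, sorted increasingly, range over the chains
`i₁ < ⋯ < i_k`). -/
theorem bound_closed_form (n : ℕ) (hn : 1 ≤ n) (I : ℕ → ℝ) (c : ℕ → ℕ → ℝ) (b : ℕ → ℝ)
    (hb : ∀ j, 1 ≤ j → j ≤ n → b j = I j + ∑ i ∈ Finset.Ico 1 j, b i * c i j) :
    b n = I n + ∑ k ∈ Finset.Icc 1 (n - 1),
      ∑ S ∈ (Finset.Icc 1 (n - 1)).powerset.filter (fun S => S.card = k),
        I ((S.sort (· ≤ ·)).headI) * chainProd c n (S.sort (· ≤ ·)) := by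
  have hIco : Ico 1 n = Icc 1 (n - 1) := by
    ext i
    simp only [mem_Ico, mem_Icc]
    omega
  rw [eq_sum_chainWeight_of_recurrence hb n hn le_rfl, hIco, sum_powerset_eq_add_sum_Icc_card,
    chainWeight_empty, Nat.card_Icc, Nat.add_sub_cancel]
  congr 1
  refine sum_congr rfl fun k hk => sum_congr rfl fun S hS => chainWeight_of_nonempty ?_ n
  rw [← card_pos, (mem_filter.1 hS).2]
  exact (mem_Icc.1 hk).1
end

section
/- Let n ≥ 1 be a natural number and consider the transition system 𝒯 = {ρ_1, ρ_2, ρ_3, ρ_4} over the three variables (a, b, i) with ρ_1 = (−1, +1, 0), ρ_2 = (0, −1, n−1), ρ_3 = (0, 0, −1), ρ_4 = (−1, +1, −1) (the control flow abstraction of the paper's running example). Then in every finite lossy execution of 𝒯 starting from the vector (n, 0, 0): the number of steps using ρ_1 or ρ_4 is at most n, the number of steps using ρ_2 is at most n, and the number of steps using ρ_3 is at most n·(n−1); in particular, every lossy execution of 𝒯 starting from (n, 0, 0) has length at most 2n + n·(n−1) and is therefore finite. -/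
open scoped BigOperators

lemma card_filter_succ (p : ℕ → Prop) [DecidablePred p] (m : ℕ) :
    ((Finset.range (m+1)).filter p).card
      = ((Finset.range m).filter p).card + if p m then 1 else 0 := by
  rw [Finset.range_add_one, Finset.filter_insert]
  by_cases hp : p m <;> simp [hp, Finset.card_insert_of_notMem]

lemma aux_bounds (n : ℕ) (hn : 1 ≤ n) (N : ℕ) (v : ℕ → Valu 3) (d : ℕ → Upd 3)
    (h0 : v 0 = ![n, 0, 0])
    (hex : FinLossyExec {![-1, 1, 0], ![0, -1, (n : ℤ) - 1], ![0, 0, -1], ![-1, 1, -1]} N v d) :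
    ((Finset.range N).filter
        (fun m => d m = ![-1, 1, 0] ∨ d m = ![-1, 1, -1])).card ≤ n ∧
      ((Finset.range N).filter (fun m => d m = ![0, -1, (n : ℤ) - 1])).card ≤ n ∧
      ((Finset.range N).filter (fun m => d m = ![0, 0, -1])).card ≤ n * (n - 1) ∧
      N ≤ 2 * n + n * (n - 1) := by
  classical
  have ne12 : (![-1, 1, 0] : Upd 3) ≠ ![0, -1, (n : ℤ) - 1] := by
    intro hh; simpa using congrFun hh 0
  have ne13 : (![-1, 1, 0] : Upd 3) ≠ ![0, 0, -1] := by
    intro hh; simpa using congrFun hh 0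
  have ne42 : (![-1, 1, -1] : Upd 3) ≠ ![0, -1, (n : ℤ) - 1] := by
    intro hh; simpa using congrFun hh 0
  have ne43 : (![-1, 1, -1] : Upd 3) ≠ ![0, 0, -1] := by
    intro hh; simpa using congrFun hh 0
  have ne21 : (![0, -1, (n : ℤ) - 1] : Upd 3) ≠ ![-1, 1, 0] := by
    intro hh; simpa using congrFun hh 0
  have ne24 : (![0, -1, (n : ℤ) - 1] : Upd 3) ≠ ![-1, 1, -1] := by
    intro hh; simpa using congrFun hh 0
  have ne23 : (![0, -1, (n : ℤ) - 1] : Upd 3) ≠ ![0, 0, -1] := by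
    intro hh; simpa using congrFun hh 1
  have ne31 : (![0, 0, -1] : Upd 3) ≠ ![-1, 1, 0] := by
    intro hh; simpa using congrFun hh 0
  have ne34 : (![0, 0, -1] : Upd 3) ≠ ![-1, 1, -1] := by
    intro hh; simpa using congrFun hh 0
  have ne32 : (![0, 0, -1] : Upd 3) ≠ ![0, -1, (n : ℤ) - 1] := by
    intro hh; simpa using congrFun hh 1
  set A : ℕ → ℕ := fun m =>
    ((Finset.range m).filter (fun k => d k = ![-1, 1, 0] ∨ d k = ![-1, 1, -1])).card with hA
  set B : ℕ → ℕ := fun m =>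
    ((Finset.range m).filter (fun k => d k = ![0, -1, (n : ℤ) - 1])).card with hB
  set C : ℕ → ℕ := fun m =>
    ((Finset.range m).filter (fun k => d k = ![0, 0, -1])).card with hC
  have key : ∀ m, m ≤ N →
      (A m : ℤ) + v m 0 ≤ n ∧ (B m : ℤ) + v m 1 ≤ A m ∧
        (C m : ℤ) + v m 2 ≤ ((n : ℤ) - 1) * B m := by
    intro m
    induction m with
    | zero =>
      intro _
      simp [hA, hB, hC, h0]
    | succ m ih =>
      intro hm
      obtain ⟨IA, IB, IC⟩ := ih (by omega)
      obtain ⟨hdm, hstep⟩ := hex m (by omega)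
      have h0' := hstep 0
      have h1' := hstep 1
      have h2' := hstep 2
      have hAs : A (m+1) = A m + if (d m = ![-1, 1, 0] ∨ d m = ![-1, 1, -1]) then 1 else 0 :=
        card_filter_succ _ m
      have hBs : B (m+1) = B m + if d m = ![0, -1, (n : ℤ) - 1] then 1 else 0 :=
        card_filter_succ _ m
      have hCs : C (m+1) = C m + if d m = ![0, 0, -1] then 1 else 0 :=
        card_filter_succ _ m
      simp only [Set.mem_insert_iff, Set.mem_singleton_iff] at hdm
      rcases hdm with h | h | h | h <;>
        rw [h] at h0' h1' h2' <;>
        simp only [Matrix.cons_val_zero, Matrix.cons_val_one, Matrix.head_cons,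
          Matrix.cons_val_two, Matrix.tail_cons] at h0' h1' h2' <;>
        simp only [h, ne12, ne13, ne42, ne43, ne21, ne24, ne23, ne31, ne34, ne32,
          or_self, if_true, if_false, eq_self_iff_true, or_false, false_or, true_or, or_true,
          not_false_iff, add_zero] at hAs hBs hCs <;>
        rw [hAs, hBs, hCs] <;>
        push_cast
      · exact ⟨by linarith, by linarith, by linarith⟩
      · have hr : ((n : ℤ) - 1) * (↑(B m) + 1) = ((n : ℤ) - 1) * ↑(B m) + ((n : ℤ) - 1) := by
          ring
        exact ⟨by linarith, by linarith, by rw [hr]; linarith⟩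
      · exact ⟨by linarith, by linarith, by linarith⟩
      · exact ⟨by linarith, by linarith, by linarith⟩
  obtain ⟨IA, IB, IC⟩ := key N le_rfl
  have hva : (0 : ℤ) ≤ v N 0 := Int.ofNat_nonneg _
  have hvb : (0 : ℤ) ≤ v N 1 := Int.ofNat_nonneg _
  have hvc : (0 : ℤ) ≤ v N 2 := Int.ofNat_nonneg _
  have hAn : (A N : ℤ) ≤ n := by linarith
  have hBn : (B N : ℤ) ≤ n := by linarith
  have hCn : (C N : ℤ) ≤ ((n : ℤ) - 1) * n := by
    have h1 : ((n:ℤ) - 1) * B N ≤ ((n:ℤ) - 1) * n := by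
      have h1 : (1:ℤ) ≤ (n:ℤ) := by exact_mod_cast hn
      have : (0:ℤ) ≤ (n:ℤ) - 1 := by linarith
      exact mul_le_mul_of_nonneg_left hBn this
    linarith
  have hAn' : A N ≤ n := by exact_mod_cast hAn
  have hBn' : B N ≤ n := by exact_mod_cast hBn
  have hCn' : C N ≤ n * (n - 1) := by
    have : ((n * (n - 1) : ℕ) : ℤ) = ((n : ℤ) - 1) * n := by
      push_cast [Nat.cast_sub hn]; ring
    exact_mod_cast hCn.trans_eq this.symm
  have hq : ((Finset.range N).filter
      (fun k => d k = ![-1, 1, 0] ∨ d k = ![-1, 1, -1])).card ≤ n := hAn'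
  have hr : ((Finset.range N).filter (fun k => d k = ![0, -1, (n : ℤ) - 1])).card ≤ n := hBn'
  have hp : ((Finset.range N).filter (fun k => d k = ![0, 0, -1])).card ≤ n * (n - 1) := hCn'
  refine ⟨hq, hr, hp, ?_⟩
  have hsub : Finset.range N ⊆
      ((Finset.range N).filter (fun k => d k = ![-1, 1, 0] ∨ d k = ![-1, 1, -1])) ∪
        ((Finset.range N).filter (fun k => d k = ![0, -1, (n : ℤ) - 1])) ∪
        ((Finset.range N).filter (fun k => d k = ![0, 0, -1])) := by
    intro m hm
    have := (hex m (Finset.mem_range.mp hm)).1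
    simp only [Set.mem_insert_iff, Set.mem_singleton_iff] at this
    simp only [Finset.mem_union, Finset.mem_filter]
    rcases this with h | h | h | h
    · exact Or.inl (Or.inl ⟨hm, Or.inl h⟩)
    · exact Or.inl (Or.inr ⟨hm, h⟩)
    · exact Or.inr ⟨hm, h⟩
    · exact Or.inl (Or.inl ⟨hm, Or.inr h⟩)
  have hle := Finset.card_le_card hsub
  rw [Finset.card_range] at hle
  have h1 := Finset.card_union_le
    (((Finset.range N).filter (fun k => d k = ![-1, 1, 0] ∨ d k = ![-1, 1, -1])) ∪
      ((Finset.range N).filter (fun k => d k = ![0, -1, (n : ℤ) - 1])))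
    ((Finset.range N).filter (fun k => d k = ![0, 0, -1]))
  have h2 := Finset.card_union_le
    ((Finset.range N).filter (fun k => d k = ![-1, 1, 0] ∨ d k = ![-1, 1, -1]))
    ((Finset.range N).filter (fun k => d k = ![0, -1, (n : ℤ) - 1]))
  omega

/-- For the transition system `{ρ₁, ρ₂, ρ₃, ρ₄}` over `(a, b, i)` with
`ρ₁ = (−1,1,0)`, `ρ₂ = (0,−1,n−1)`, `ρ₃ = (0,0,−1)`, `ρ₄ = (−1,1,−1)` (the control flow
abstraction of the running example), every finite lossy execution from `(n,0,0)` uses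
`ρ₁` or `ρ₄` at most `n` times, `ρ₂` at most `n` times, and `ρ₃` at most `n·(n−1)` times;
in particular every lossy execution from `(n,0,0)` has length at most `2n + n·(n−1)` and
every lossy execution from `(n,0,0)` is finite. -/
theorem running_example_bounds (n : ℕ) (hn : 1 ≤ n) :
    (∀ (N : ℕ) (v : ℕ → Valu 3) (d : ℕ → Upd 3),
        v 0 = ![n, 0, 0] →
        FinLossyExec {![-1, 1, 0], ![0, -1, (n : ℤ) - 1], ![0, 0, -1], ![-1, 1, -1]} N v d →
        ((Finset.range N).filter
            (fun m => d m = ![-1, 1, 0] ∨ d m = ![-1, 1, -1])).card ≤ n ∧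
          ((Finset.range N).filter (fun m => d m = ![0, -1, (n : ℤ) - 1])).card ≤ n ∧
          ((Finset.range N).filter (fun m => d m = ![0, 0, -1])).card ≤ n * (n - 1) ∧
          N ≤ 2 * n + n * (n - 1)) ∧
      ¬ ∃ (v : ℕ → Valu 3) (d : ℕ → Upd 3),
          v 0 = ![n, 0, 0] ∧
            LossyExec {![-1, 1, 0], ![0, -1, (n : ℤ) - 1], ![0, 0, -1], ![-1, 1, -1]} v d := by
  
  constructor
  · exact fun N v d h0 hex => aux_bounds n hn N v d h0 hex
  · rintro ⟨v, d, h0, hL⟩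
    have hfin : FinLossyExec
        {![-1, 1, 0], ![0, -1, (n : ℤ) - 1], ![0, 0, -1], ![-1, 1, -1]}
        (2 * n + n * (n - 1) + 1) v d := fun m _ => hL m
    have := (aux_bounds n hn _ v d h0 hfin).2.2.2
    omega
end
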